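/- Let I be a finite set, and for α ∈ I let Z_α be ℕ-valued random variables, mutually independent under a probability measure P. Let w : I → ℤ and u : I → ℤ be deterministic weight functions, let T = Σ_{α∈I} w(α) Z_α and let t be such that P(T = t) > 0. Let C_I be a random element of ℕ^I equal in distribution (under P) to ((Z_α)_{α∈I} | T = t), and set U = Σ_{α∈I} u(α) C_α. Let θ > 0 be such that E[θ^{Σ_α u(α) Z_α}] < ∞, and let P_θ denote the tilted law of Z_I given by P_θ(Z_I = a) = θ^{Σ_α u(α)a(α)} P(Z_I = a) / E[θ^{Σ_α u(α)Z_α}]. Then the combinatorial generating function factorizes as E[θ^U] = E[θ^{Σ_α u(α) Z_α}] · P_θ(T = t) / P(T = t). -/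

import Mathlib

open MeasureTheory ProbabilityTheory

/-! The law of `C` is the law of `Z` restricted to `{a | w·a = t}` and renormalised by `P(T = t)`,
so `E[θ^U] = Σ_{w·a = t} θ^{u·a} P(Z = a) / P(T = t)`. Multiplying and dividing each term by
`E[θ^{u·Z}]` turns the numerator into `E[θ^{u·Z}] · P_θ(T = t)`. -/

section
variable {Ω α β : Type*} [MeasurableSpace Ω] {μ : Measure Ω}

lemma integral_pos_of_forall_pos [NeZero μ] {f : Ω → ℝ} (hf : ∀ ω, 0 < f ω)
    (hfi : Integrable f μ) : 0 < ∫ ω, f ω ∂μ := by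
  rw [integral_pos_iff_support_of_nonneg (fun ω ↦ (hf ω).le) hfi,
    Function.support_eq_univ fun ω ↦ (hf ω).ne']
  simp [NeZero.ne μ]

/-- No integrability is needed: if `f ∘ X` is not integrable, both sides are the junk value `0`. -/
lemma integral_comp_eq_toReal_tsum [MeasurableSpace α] [Countable α]
    [MeasurableSingletonClass α] {X : Ω → α} (hX : Measurable X) {f : α → ℝ}
    (hf : ∀ a, 0 ≤ f a) :
    ∫ ω, f (X ω) ∂μ = (∑' a, ENNReal.ofReal (f a) * μ (X ⁻¹' {a})).toReal := by
  rw [integral_eq_lintegral_of_nonneg_ae (ae_of_all _ fun ω ↦ hf (X ω))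
      ((measurable_of_countable f).comp hX).aestronglyMeasurable,
    ← lintegral_map (measurable_of_countable fun a ↦ ENNReal.ofReal (f a)) hX,
    lintegral_countable']
  simp_rw [Measure.map_apply hX (measurableSet_singleton _)]

lemma measure_preimage_singleton_inter_preimage_comp (X : Ω → α) (F : α → β) (a : α) (t : β) :
    μ (X ⁻¹' {a} ∩ (F ∘ X) ⁻¹' {t}) = (F ⁻¹' {t}).indicator (fun b ↦ μ (X ⁻¹' {b})) a := by
  rw [Set.preimage_comp, ← Set.preimage_inter]
  by_cases h : a ∈ F ⁻¹' {t}
  · rw [Set.singleton_inter_of_mem h, Set.indicator_of_mem h]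
  · rw [Set.singleton_inter_of_notMem h, Set.indicator_of_notMem h, Set.preimage_empty,
      measure_empty]

lemma integral_comp_of_eq_cond_law [IsFiniteMeasure μ] [MeasurableSpace α] [Countable α]
    [MeasurableSingletonClass α] {X C : Ω → α} (hC : Measurable C) {F : α → β} {t : β}
    (hCX : ∀ a, μ (C ⁻¹' {a}) = μ (X ⁻¹' {a} ∩ (F ∘ X) ⁻¹' {t}) / μ ((F ∘ X) ⁻¹' {t}))
    {g : α → ℝ} (hg : ∀ a, 0 ≤ g a) :
    ∫ ω, g (C ω) ∂μ = (∑' b : F ⁻¹' {t}, g b * (μ (X ⁻¹' {(b : α)})).toReal)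
      / (μ ((F ∘ X) ⁻¹' {t})).toReal := by
  calc ∫ ω, g (C ω) ∂μ = (∑' a, ENNReal.ofReal (g a) * μ (C ⁻¹' {a})).toReal :=
        integral_comp_eq_toReal_tsum hC hg
    _ = ((∑' b : F ⁻¹' {t}, ENNReal.ofReal (g b) * μ (X ⁻¹' {(b : α)}))
          / μ ((F ∘ X) ⁻¹' {t})).toReal := by
        rw [tsum_subtype (F ⁻¹' {t}) fun b ↦ ENNReal.ofReal (g b) * μ (X ⁻¹' {b})]
        simp_rw [hCX, measure_preimage_singleton_inter_preimage_comp, Set.indicator_mul_right,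
          ← mul_div_assoc, div_eq_mul_inv, ENNReal.tsum_mul_right]
    _ = _ := by
        rw [ENNReal.toReal_div, ENNReal.tsum_toReal_eq fun b ↦
          ENNReal.mul_ne_top ENNReal.ofReal_ne_top (measure_ne_top μ _)]
        simp_rw [ENNReal.toReal_mul, ENNReal.toReal_ofReal (hg _)]

end

theorem stmt15_general
    {Ω : Type*} [MeasurableSpace Ω] (μ : Measure Ω) [IsProbabilityMeasure μ]
    {I : Type*} [Fintype I]
    (Z : I → Ω → ℕ)
    (w u : I → ℤ) (t : ℤ)
    (T : Ω → ℤ) (hT : T = fun ω => ∑ α, w α * (Z α ω : ℤ))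
    (C : Ω → I → ℕ) (hCmeas : Measurable C)
    (hC : ∀ a : I → ℕ,
      μ {ω | C ω = a}
        = μ ({ω | (fun α => Z α ω) = a} ∩ {ω | T ω = t}) / μ {ω | T ω = t})
    (θ : ℝ) (hθ : 0 < θ)
    (hint : Integrable (fun ω => θ ^ (∑ α, u α * (Z α ω : ℤ))) μ)
    (EZ EU : ℝ)
    (hEZ : EZ = ∫ ω, θ ^ (∑ α, u α * (Z α ω : ℤ)) ∂μ)
    (hEU : EU = ∫ ω, θ ^ (∑ α, u α * (C ω α : ℤ)) ∂μ)
    (PθZ : (I → ℕ) → ℝ)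
    (hPθZ : ∀ a : I → ℕ,
      PθZ a = θ ^ (∑ α, u α * (a α : ℤ))
          * (μ {ω | (fun α => Z α ω) = a}).toReal / EZ)
    (PθT : ℝ)
    (hPθT : PθT = ∑' b : {b : I → ℕ // (∑ α, w α * (b α : ℤ)) = t}, PθZ b) :
    EU = EZ * PθT / (μ {ω | T ω = t}).toReal := by
  subst hT hEU hPθT
  have hEZ_pos : 0 < EZ := hEZ ▸ integral_pos_of_forall_pos (fun ω ↦ zpow_pos hθ _) hint
  refine (integral_comp_of_eq_cond_law (X := fun ω α ↦ Z α ω)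
    (F := fun a ↦ ∑ α, w α * (a α : ℤ)) (g := fun a ↦ θ ^ ∑ α, u α * (a α : ℤ))
    hCmeas hC fun a ↦ (zpow_pos hθ _).le).trans ?_
  simp_rw [hPθZ, tsum_div_const, mul_div_cancel₀ _ hEZ_pos.ne']
  rfl

/-- Generating-function factorization under tilting.  If
`C ≝ (Z | T = t)` with `Z_α` independent, `T = Σ w(α) Z_α`, `U = Σ u(α) C_α`, and
`θ > 0` has `E[θ^{u·Z}] < ∞`, then
`E[θ^U] = E[θ^{u·Z}] · P_θ(T = t) / P(T = t)`, where `P_θ` is the tilted law of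
`Z` given by `P_θ(Z = a) = θ^{u·a} P(Z = a)/E[θ^{u·Z}]`. -/
theorem stmt15
    {Ω : Type*} [MeasurableSpace Ω] (μ : Measure Ω) [IsProbabilityMeasure μ]
    {I : Type*} [Fintype I]
    (Z : I → Ω → ℕ) (hZmeas : ∀ α, Measurable (Z α))
    (hindep : iIndepFun Z μ)
    (w u : I → ℤ) (t : ℤ)
    (T : Ω → ℤ) (hT : T = fun ω => ∑ α, w α * (Z α ω : ℤ))
    (hpos : μ {ω | T ω = t} ≠ 0)
    (C : Ω → I → ℕ) (hCmeas : Measurable C)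
    (hC : ∀ a : I → ℕ,
      μ {ω | C ω = a}
        = μ ({ω | (fun α => Z α ω) = a} ∩ {ω | T ω = t}) / μ {ω | T ω = t})
    (θ : ℝ) (hθ : 0 < θ)
    (hint : Integrable (fun ω => θ ^ (∑ α, u α * (Z α ω : ℤ))) μ)
    (EZ EU : ℝ)
    (hEZ : EZ = ∫ ω, θ ^ (∑ α, u α * (Z α ω : ℤ)) ∂μ)
    (hEU : EU = ∫ ω, θ ^ (∑ α, u α * (C ω α : ℤ)) ∂μ)
    (PθZ : (I → ℕ) → ℝ)
    (hPθZ : ∀ a : I → ℕ,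
      PθZ a = θ ^ (∑ α, u α * (a α : ℤ))
          * (μ {ω | (fun α => Z α ω) = a}).toReal / EZ)
    (PθT : ℝ)
    (hPθT : PθT = ∑' b : {b : I → ℕ // (∑ α, w α * (b α : ℤ)) = t}, PθZ b) :
    EU = EZ * PθT / (μ {ω | T ω = t}).toReal :=
  stmt15_general μ Z w u t T hT C hCmeas hC θ hθ hint EZ EU hEZ hEU PθZ hPθZ PθT hPθT
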